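/- Let I be an ideal of R{x̄}_{D*} with characteristic set 𝒞 = {c₁,…,c_m}. If f ∈ I is reduced with respect to 𝒞 and s_f ∉ I, then f ∈ (I ∩ R), the ideal of R{x̄}_{D*} generated by I ∩ R. -/

import Mathlib

open MvPolynomial
open scoped BigOperators

/-- The variables `dᶿxⱼ` of the `D*`-polynomial ring in `n` indeterminates with `M`
operators: a pair (index of `x`, multi-exponent `θ ∈ ℕ^M`). -/
abbrev DVar (n M : ℕ) : Type := Fin n × (Fin M → ℕ)

/-- Applying the composite operator with multi-exponent `φ` to a variable. -/
def shiftVar {n M : ℕ} (u : DVar n M) (φ : Fin M → ℕ) : DVar n M :=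
  (u.1, fun l => u.2 l + φ l)

/-- `φ` encodes a composition of the associated endomorphisms only (a `σ`-transform). -/
def IsSigmaExp {M : ℕ} (σset : Finset (Fin M)) (φ : Fin M → ℕ) : Prop :=
  ∀ k, φ k ≠ 0 → k ∈ σset

/-- `φ` encodes a composition of operators involving at least one derivation-type
operator (a `δ`-transform). -/
def IsDeltaExp {M : ℕ} (σset : Finset (Fin M)) (φ : Fin M → ℕ) : Prop :=
  ∃ k, k ∉ σset ∧ φ k ≠ 0

/-- `u` is the leader of `f`: the highest-ranked variable occurring in `f`. -/
def IsLeader {R : Type} [CommRing R] {n M : ℕ} (lt : DVar n M → DVar n M → Prop)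
    (f : MvPolynomial (DVar n M) R) (u : DVar n M) : Prop :=
  u ∈ f.vars ∧ ∀ v ∈ f.vars, v ≠ u → lt v u

/-- `f` lies in (the image of) `R`, i.e. is a constant polynomial. -/
def IsConst {R : Type} [CommRing R] {n M : ℕ} (f : MvPolynomial (DVar n M) R) : Prop :=
  ∃ r : R, f = C r

/-- `g` is reduced with respect to `f`: `g` contains no `δ`-transform of the leader of
`f`, and every `σ`-transform of the leader of `f` occurs in `g` with degree `< deg f`. -/
def ReducedWrt {R : Type} [CommRing R] {n M : ℕ} (lt : DVar n M → DVar n M → Prop)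
    (σset : Finset (Fin M)) (g f : MvPolynomial (DVar n M) R) : Prop :=
  ∀ u : DVar n M, IsLeader lt f u →
    (∀ φ : Fin M → ℕ, IsDeltaExp σset φ → shiftVar u φ ∉ g.vars) ∧
    (∀ φ : Fin M → ℕ, IsSigmaExp σset φ →
      degreeOf (shiftVar u φ) g < degreeOf u f)

/-- `g` is reduced with respect to every element of `A`. -/
def ReducedWrtSet {R : Type} [CommRing R] {n M : ℕ} (lt : DVar n M → DVar n M → Prop)
    (σset : Finset (Fin M)) (g : MvPolynomial (DVar n M) R)
    (A : Set (MvPolynomial (DVar n M) R)) : Prop :=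
  ∀ f ∈ A, ReducedWrt lt σset g f

/-- `A` is autoreduced: no element is constant and any two distinct elements are reduced
with respect to each other. -/
def Autoreduced {R : Type} [CommRing R] {n M : ℕ} (lt : DVar n M → DVar n M → Prop)
    (σset : Finset (Fin M)) (A : Set (MvPolynomial (DVar n M) R)) : Prop :=
  (∀ f ∈ A, ¬ IsConst f) ∧
  ∀ f ∈ A, ∀ g ∈ A, f ≠ g → ReducedWrt lt σset g f

/-- `rk f < rk g`: the leader of `f` is below that of `g`, or they coincide and the
leading degree of `f` is smaller. -/
def RkLt {R : Type} [CommRing R] {n M : ℕ} (lt : DVar n M → DVar n M → Prop)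
    (f g : MvPolynomial (DVar n M) R) : Prop :=
  ∃ uf ug, IsLeader lt f uf ∧ IsLeader lt g ug ∧
    (lt uf ug ∨ (uf = ug ∧ degreeOf uf f < degreeOf ug g))

/-- `rk f = rk g`: same leader and same leading degree. -/
def RkEq {R : Type} [CommRing R] {n M : ℕ} (lt : DVar n M → DVar n M → Prop)
    (f g : MvPolynomial (DVar n M) R) : Prop :=
  ∃ uf ug, IsLeader lt f uf ∧ IsLeader lt g ug ∧ uf = ug ∧
    degreeOf uf f = degreeOf ug g

/-- `rk f ≤ rk g` (with constants of lowest rank). -/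
def RkLe {R : Type} [CommRing R] {n M : ℕ} (lt : DVar n M → DVar n M → Prop)
    (f g : MvPolynomial (DVar n M) R) : Prop :=
  IsConst f ∨ RkLt lt f g ∨ RkEq lt f g

/-- `lt` is a ranking of the variables, with `σ`-operators `σset` and operator ranks `ν`. -/
structure IsRanking {n M : ℕ} (lt : DVar n M → DVar n M → Prop)
    (σset : Finset (Fin M)) (ν : Fin M → ℕ) : Prop where
  trichot : ∀ u v, lt u v ∨ u = v ∨ lt v u
  irrefl : ∀ u, ¬ lt u u
  trans : ∀ u v w, lt u v → lt v w → lt u w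
  wf : WellFounded lt
  lt_op : ∀ (u : DVar n M) (k : Fin M), lt u (shiftVar u (Pi.single k 1))
  mono : ∀ (u v : DVar n M) (k : Fin M), lt u v →
    lt (shiftVar u (Pi.single k 1)) (shiftVar v (Pi.single k 1))
  op_ord : ∀ (u : DVar n M) (k k' : Fin M), ν k < ν k' →
    lt (shiftVar u (Pi.single k 1)) (shiftVar u (Pi.single k' 1))
  nu_sigma : ∀ k ∈ σset, ν k = 0

/-- Lexicographic comparison of two rank-sorted lists of `D*`-polynomials. -/
def PrecList {R : Type} [CommRing R] {n M : ℕ} (lt : DVar n M → DVar n M → Prop)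
    (la lb : List (MvPolynomial (DVar n M) R)) : Prop :=
  (∃ i : ℕ, i < la.length ∧ i < lb.length ∧
      RkLt lt (la.getD i 0) (lb.getD i 0) ∧
      ∀ j < i, RkEq lt (la.getD j 0) (lb.getD j 0)) ∨
  (lb.length < la.length ∧ ∀ i < lb.length, RkEq lt (la.getD i 0) (lb.getD i 0))

/-- The pre-order `A ≺ B` on autoreduced (finite) sets of `D*`-polynomials. -/
def Prec {R : Type} [CommRing R] {n M : ℕ} (lt : DVar n M → DVar n M → Prop)
    (A B : Finset (MvPolynomial (DVar n M) R)) : Prop :=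
  ∃ la lb : List (MvPolynomial (DVar n M) R),
    la.Nodup ∧ lb.Nodup ∧ (∀ f, f ∈ la ↔ f ∈ A) ∧ (∀ f, f ∈ lb ↔ f ∈ B) ∧
    la.Pairwise (RkLt lt) ∧ lb.Pairwise (RkLt lt) ∧ PrecList lt la lb

/-- The initial of `f` with respect to the variable `u`: the leading coefficient of `f`
viewed as a univariate polynomial in `u`. -/
noncomputable def initialOf {R : Type} [CommRing R] {n M : ℕ} (u : DVar n M)
    (f : MvPolynomial (DVar n M) R) : MvPolynomial (DVar n M) R :=
  ∑ d ∈ f.support.filter (fun d => d u = degreeOf u f),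
    monomial (d.erase u) (coeff d f)

/-- `𝒞` is a characteristic set of the ideal `I`: a minimal element (for `≺`) of the
collection of autoreduced subsets `A ⊆ I` with `s_f ∉ I` for all `f ∈ A`. -/
def IsCharSet {R : Type} [CommRing R] {n M : ℕ} (lt : DVar n M → DVar n M → Prop)
    (σset : Finset (Fin M)) (I : Ideal (MvPolynomial (DVar n M) R))
    (𝒞 : Finset (MvPolynomial (DVar n M) R)) : Prop :=
  (Autoreduced lt σset (𝒞 : Set (MvPolynomial (DVar n M) R)) ∧
    (𝒞 : Set (MvPolynomial (DVar n M) R)) ⊆ (I : Set (MvPolynomial (DVar n M) R)) ∧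
    ∀ f ∈ 𝒞, ∀ u : DVar n M, IsLeader lt f u → pderiv u f ∉ I) ∧
  ∀ B : Finset (MvPolynomial (DVar n M) R),
    Autoreduced lt σset (B : Set (MvPolynomial (DVar n M) R)) →
    (B : Set (MvPolynomial (DVar n M) R)) ⊆ (I : Set (MvPolynomial (DVar n M) R)) →
    (∀ f ∈ B, ∀ u : DVar n M, IsLeader lt f u → pderiv u f ∉ I) →
    ¬ Prec lt B 𝒞

/-!
If `f` were not constant, the members of `𝒞` of rank below `f`, listed by increasing rank and
followed by `f`, would form an autoreduced subset of `I` with separants outside `I` that precedes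
`𝒞` in the lexicographic order, contradicting the minimality of `𝒞`. A constant `f ∈ I` is
one of the generators of `(I ∩ R)`.
-/

theorem Finset.exists_forall_ne_rel_of_isStrictTotalOrder {α : Type*} {r : α → α → Prop}
    [IsStrictTotalOrder α r] {s : Finset α} (hs : s.Nonempty) :
    ∃ a ∈ s, ∀ b ∈ s, b ≠ a → r b a := by
  classical
  let := linearOrderOfSTO r
  exact ⟨s.max' hs, s.max'_mem hs, fun b hb hne => lt_of_le_of_ne (s.le_max' b hb) hne⟩

theorem Finset.exists_list_pairwise_of_trichotomous {α : Type*} {r : α → α → Prop}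
    [IsStrictOrder α r] (s : Finset α)
    (htri : ∀ a ∈ s, ∀ b ∈ s, r a b ∨ a = b ∨ r b a) :
    ∃ l : List α, (∀ x, x ∈ l ↔ x ∈ s) ∧ l.Pairwise r := by
  classical
  have : IsStrictTotalOrder s (fun a b => r a b) :=
    { trichotomous := fun a b hab hba => by
        rcases htri a a.2 b b.2 with h | h | h
        exacts [absurd h hab, Subtype.ext h, absurd h hba]
      irrefl := fun a => irrefl_of r a.1
      trans := fun a b c => trans_of r }
  let := linearOrderOfSTO fun a b : s => r a b
  exact ⟨(Finset.univ : Finset s).sort.map Subtype.val, fun x => by simp,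
    (sortedLT_sort _).pairwise.map _ fun _ _ h => h⟩

section DPolynomial

variable {R : Type} [CommRing R] {n M : ℕ} {lt : DVar n M → DVar n M → Prop}
  {σset : Finset (Fin M)} {ν : Fin M → ℕ}

@[simp]
theorem shiftVar_zero (u : DVar n M) : shiftVar u 0 = u := rfl

theorem shiftVar_shiftVar (u : DVar n M) (φ ψ : Fin M → ℕ) :
    shiftVar (shiftVar u φ) ψ = shiftVar u (φ + ψ) := by
  simp only [shiftVar, Pi.add_apply, add_assoc]

namespace IsRanking

theorem isStrictTotalOrder (hrank : IsRanking lt σset ν) : IsStrictTotalOrder (DVar n M) lt :=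
  { trichotomous := fun u v huv hvu => (hrank.trichot u v).resolve_left huv |>.resolve_right hvu
    irrefl := hrank.irrefl
    trans := hrank.trans }

theorem lt_shiftVar (hrank : IsRanking lt σset ν) {φ : Fin M → ℕ} (hφ : φ ≠ 0)
    (u : DVar n M) : lt u (shiftVar u φ) := by
  classical
  let P : (Fin M → ℕ) → Prop := fun φ => φ = 0 ∨ ∀ u, lt u (shiftVar u φ)
  have add : ∀ φ ψ, P φ → P ψ → P (φ + ψ) := by
    rintro φ ψ (rfl | hφ) (rfl | hψ)
    · exact .inl (add_zero 0)
    · exact (zero_add ψ).symm ▸ .inr hψ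
    · exact (add_zero φ).symm ▸ .inr hφ
    · exact .inr fun u => hrank.trans _ _ _ (hφ u) (shiftVar_shiftVar u φ ψ ▸ hψ _)
  have single : ∀ k m, P (Pi.single k m) := by
    intro k m
    induction m with
    | zero => exact .inl (Pi.single_zero k)
    | succ m ih =>
      exact (Pi.single_add (f := fun _ => ℕ) k m 1).symm ▸
        add _ _ ih (.inr fun u => hrank.lt_op u k)
  exact (Pi.single_induction P φ (.inl rfl) add single).resolve_left hφ u

end IsRanking

variable {g f : MvPolynomial (DVar n M) R} {u v w : DVar n M}

theorem IsLeader.unique (hrank : IsRanking lt σset ν) (hu : IsLeader lt g u)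
    (hv : IsLeader lt g v) : u = v := by
  by_contra h
  exact hrank.irrefl u (hrank.trans _ _ _ (hv.2 u hu.1 h) (hu.2 v hv.1 (Ne.symm h)))

theorem IsLeader.notMem_vars_of_lt (hrank : IsRanking lt σset ν) (hg : IsLeader lt g v)
    (hvw : lt v w) : w ∉ g.vars := fun hw => by
  by_cases h : w = v
  · exact hrank.irrefl v (h ▸ hvw)
  · exact hrank.irrefl v (hrank.trans _ _ _ hvw (hg.2 w hw h))

theorem IsLeader.degreeOf_pos (hg : IsLeader lt g u) : 0 < degreeOf u g :=
  Nat.pos_of_ne_zero (mem_vars_iff_degreeOf_ne_zero.mp hg.1)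

theorem exists_isLeader (hrank : IsRanking lt σset ν) (hg : ¬ IsConst g) :
    ∃ u, IsLeader lt g u := by
  have := hrank.isStrictTotalOrder
  have hne : g.vars.Nonempty :=
    Finset.nonempty_iff_ne_empty.mpr fun h => hg ⟨_, vars_eq_empty_iff_eq_C.mp h⟩
  obtain ⟨u, hu⟩ := Finset.exists_forall_ne_rel_of_isStrictTotalOrder (r := lt) hne
  exact ⟨u, hu⟩

theorem rkEq_self_of_not_isConst (hrank : IsRanking lt σset ν) (hg : ¬ IsConst g) :
    RkEq lt g g :=
  let ⟨u, hu⟩ := exists_isLeader hrank hg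
  ⟨u, u, hu, hu, rfl, rfl⟩

theorem isStrictOrder_rkLt (hrank : IsRanking lt σset ν) :
    IsStrictOrder (MvPolynomial (DVar n M) R) (RkLt lt) where
  irrefl := by
    rintro g ⟨u, v, hu, hv, h⟩
    obtain rfl := hu.unique hrank hv
    rcases h with h | ⟨-, h⟩
    exacts [hrank.irrefl u h, Nat.lt_irrefl _ h]
  trans := by
    rintro a b c ⟨ua, ub, hua, hub, hab⟩ ⟨ub', uc, hub', huc, hbc⟩
    obtain rfl := hub.unique hrank hub'
    refine ⟨ua, uc, hua, huc, ?_⟩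
    rcases hab with hab | ⟨rfl, hab⟩ <;> rcases hbc with hbc | ⟨rfl, hbc⟩
    exacts [.inl (hrank.trans _ _ _ hab hbc), .inl hab, .inl hbc, .inr ⟨rfl, hab.trans hbc⟩]

theorem ReducedWrt.not_rkEq (h : ReducedWrt lt σset g f) : ¬ RkEq lt f g := by
  rintro ⟨u, _, hf, -, rfl, hdeg⟩
  have := (h u hf).2 0 fun k hk => (hk rfl).elim
  rw [shiftVar_zero] at this
  omega

theorem rkLt_or_rkLt_of_reducedWrt (hrank : IsRanking lt σset ν) (hf : ¬ IsConst f)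
    (hg : ¬ IsConst g) (h : ReducedWrt lt σset g f) : RkLt lt f g ∨ RkLt lt g f := by
  obtain ⟨uf, huf⟩ := exists_isLeader hrank hf
  obtain ⟨ug, hug⟩ := exists_isLeader hrank hg
  rcases hrank.trichot uf ug with hlt | rfl | hlt
  · exact .inl ⟨uf, ug, huf, hug, .inl hlt⟩
  · rcases lt_trichotomy (degreeOf uf f) (degreeOf uf g) with hdeg | hdeg | hdeg
    · exact .inl ⟨uf, uf, huf, hug, .inr ⟨rfl, hdeg⟩⟩
    · exact absurd ⟨uf, uf, huf, hug, rfl, hdeg⟩ h.not_rkEq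
    · exact .inr ⟨uf, uf, hug, huf, .inr ⟨rfl, hdeg⟩⟩
  · exact .inr ⟨ug, uf, hug, huf, .inl hlt⟩

/-- Every transform of the leader of `f` ranks at least as high as that leader, so it does not
occur in a polynomial of lower rank. -/
theorem RkLt.reducedWrt (hrank : IsRanking lt σset ν) (h : RkLt lt g f) :
    ReducedWrt lt σset g f := by
  obtain ⟨v, u, hv, hu, hvu⟩ := h
  intro u' hu'
  obtain rfl := hu.unique hrank hu'
  have hlt : ∀ {w}, w ∉ g.vars → degreeOf w g < degreeOf u f := fun hw =>
    (not_not.mp (mt mem_vars_iff_degreeOf_ne_zero.mpr hw)) ▸ hu.degreeOf_pos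
  have hshift : ∀ φ : Fin M → ℕ, φ ≠ 0 → shiftVar u φ ∉ g.vars := by
    intro φ hφ
    refine hv.notMem_vars_of_lt hrank ?_
    rcases hvu with hvu | ⟨rfl, -⟩
    exacts [hrank.trans _ _ _ hvu (hrank.lt_shiftVar hφ u), hrank.lt_shiftVar hφ v]
  refine ⟨fun φ ⟨k, _, hk⟩ => hshift φ fun h => hk (congrFun h k), fun φ _ => ?_⟩
  by_cases hφ : φ = 0
  · subst hφ
    rw [shiftVar_zero]
    rcases hvu with hvu | ⟨rfl, hdeg⟩
    exacts [hlt (hv.notMem_vars_of_lt hrank hvu), hdeg]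
  · exact hlt (hshift φ hφ)

section Autoreduced

variable {A B : Set (MvPolynomial (DVar n M) R)}

theorem Autoreduced.mono (hB : Autoreduced lt σset B) (hAB : A ⊆ B) : Autoreduced lt σset A :=
  ⟨fun g hg => hB.1 g (hAB hg), fun g hg h hh => hB.2 g (hAB hg) h (hAB hh)⟩

theorem Autoreduced.insert (hA : Autoreduced lt σset A) (hf : ¬ IsConst f)
    (hfA : ReducedWrtSet lt σset f A) (hAf : ∀ g ∈ A, ReducedWrt lt σset g f) :
    Autoreduced lt σset (insert f A) := by
  refine ⟨?_, ?_⟩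
  · rintro g (rfl | hg)
    exacts [hf, hA.1 g hg]
  · rintro g (rfl | hg) h (rfl | hh) hne
    exacts [absurd rfl hne, hAf h hh, hfA g hg, hA.2 g hg h hh hne]

theorem Autoreduced.exists_list_pairwise_rkLt (hrank : IsRanking lt σset ν)
    {𝒞 : Finset (MvPolynomial (DVar n M) R)}
    (h𝒞 : Autoreduced lt σset (𝒞 : Set (MvPolynomial (DVar n M) R))) :
    ∃ l : List _, (∀ g, g ∈ l ↔ g ∈ 𝒞) ∧ l.Pairwise (RkLt lt) := by
  have := isStrictOrder_rkLt (R := R) hrank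
  refine 𝒞.exists_list_pairwise_of_trichotomous fun a ha b hb => ?_
  by_cases hab : a = b
  · exact .inr (.inl hab)
  rcases rkLt_or_rkLt_of_reducedWrt hrank (h𝒞.1 a ha) (h𝒞.1 b hb) (h𝒞.2 a ha b hb hab)
    with h | h
  exacts [.inl h, .inr (.inr h)]

end Autoreduced

theorem precList_append_singleton {l rest : List (MvPolynomial (DVar n M) R)}
    (hl : ∀ g ∈ l, RkEq lt g g) (hrest : ∀ x ∈ rest.head?, RkLt lt f x) :
    PrecList lt (l ++ [f]) (l ++ rest) := by
  have heq : ∀ j < l.length, RkEq lt ((l ++ [f]).getD j 0) ((l ++ rest).getD j 0) := by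
    intro j hj
    rw [List.getD_append _ _ _ _ hj, List.getD_append _ _ _ _ hj, List.getD_eq_getElem _ _ hj]
    exact hl _ (List.getElem_mem hj)
  cases rest with
  | nil => exact .inr ⟨by simp, by simpa using heq⟩
  | cons x rest =>
    refine .inl ⟨l.length, by simp, by simp, ?_, heq⟩
    simpa [List.getD_append_right] using hrest x rfl

theorem exists_prec_of_reducedWrtSet (hrank : IsRanking lt σset ν)
    {𝒞 : Finset (MvPolynomial (DVar n M) R)}
    (h𝒞 : Autoreduced lt σset (𝒞 : Set (MvPolynomial (DVar n M) R)))
    (hf : ¬ IsConst f) (hred : ReducedWrtSet lt σset f 𝒞) :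
    ∃ B : Finset (MvPolynomial (DVar n M) R),
      Autoreduced lt σset (B : Set (MvPolynomial (DVar n M) R)) ∧
      (B : Set (MvPolynomial (DVar n M) R)) ⊆ insert f ↑𝒞 ∧
      Prec lt B 𝒞 := by
  classical
  have := isStrictOrder_rkLt (R := R) hrank
  obtain ⟨lb, hlb, hsorted⟩ := h𝒞.exists_list_pairwise_rkLt hrank
  set p := fun g => decide (RkLt lt g f)
  set low := lb.takeWhile p
  have hlow : ∀ g ∈ low, g ∈ 𝒞 ∧ RkLt lt g f := fun g hg =>
    ⟨(hlb g).mp ((List.takeWhile_sublist _).subset hg),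
      of_decide_eq_true (List.mem_takeWhile_imp hg : p g = true)⟩
  have hlow𝒞 : (↑low.toFinset : Set _) ⊆ ↑𝒞 := fun g hg =>
    (hlow g (List.mem_toFinset.mp hg)).1
  have hpw : (low ++ [f]).Pairwise (RkLt lt) := List.pairwise_append.mpr
    ⟨hsorted.sublist (List.takeWhile_sublist _), List.pairwise_singleton _ _,
      fun g hg _ h => List.mem_singleton.mp h ▸ (hlow g hg).2⟩
  refine ⟨insert f low.toFinset, ?_, ?_, low ++ [f], lb, hpw.nodup, hsorted.nodup,
    fun g => by simp [or_comm], hlb, hpw, hsorted, ?_⟩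
  · rw [Finset.coe_insert]
    exact (h𝒞.mono hlow𝒞).insert hf (fun g hg => hred g (hlow𝒞 hg))
      fun g hg => (hlow g (List.mem_toFinset.mp hg)).2.reducedWrt hrank
  · exact (Finset.coe_insert f _).symm ▸ Set.insert_subset_insert hlow𝒞
  · -- `low ++ [f]` and `lb` agree up to the position of `f`, below the next member of `𝒞`
    rw [← List.takeWhile_append_dropWhile (p := p) (l := lb)]
    refine precList_append_singleton
      (fun g hg => rkEq_self_of_not_isConst hrank (h𝒞.1 g (hlow g hg).1)) fun x hx => ?_
    have hx𝒞 : x ∈ 𝒞 :=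
      (hlb x).mp ((List.dropWhile_sublist p).subset (List.mem_of_mem_head? hx))
    have hxf : ¬ RkLt lt x f := by
      have := List.head?_dropWhile_not p lb
      rw [Option.mem_def.mp hx] at this
      simpa [p] using this
    exact (rkLt_or_rkLt_of_reducedWrt hrank (h𝒞.1 x hx𝒞) hf (hred x hx𝒞)).resolve_left hxf

end DPolynomial

/-- If `𝒞` is a characteristic set of an ideal `I` of the
`D*`-polynomial ring, and `f ∈ I` is reduced with respect to `𝒞` with separant `s_f ∉ I`,
then `f` lies in the ideal `(I ∩ R)` generated by the constants of `I`. -/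
theorem reduced_mem_constant_ideal {R : Type} [CommRing R] {n M : ℕ}
    (lt : DVar n M → DVar n M → Prop) (σset : Finset (Fin M)) (ν : Fin M → ℕ)
    (hrank : IsRanking lt σset ν)
    (I : Ideal (MvPolynomial (DVar n M) R))
    (𝒞 : Finset (MvPolynomial (DVar n M) R))
    (h𝒞 : IsCharSet lt σset I 𝒞)
    (f : MvPolynomial (DVar n M) R) (hfI : f ∈ I)
    (hred : ReducedWrtSet lt σset f (𝒞 : Set (MvPolynomial (DVar n M) R)))
    (hsep : ∀ u : DVar n M, IsLeader lt f u → pderiv u f ∉ I) :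
    f ∈ Ideal.span ((I : Set (MvPolynomial (DVar n M) R)) ∩
      Set.range (C : R →+* MvPolynomial (DVar n M) R)) := by
  by_cases hconst : IsConst f
  · obtain ⟨r, rfl⟩ := hconst
    exact Ideal.subset_span ⟨hfI, r, rfl⟩
  obtain ⟨⟨h𝒞auto, h𝒞I, h𝒞sep⟩, hmin⟩ := h𝒞
  obtain ⟨B, hB, hBsub, hprec⟩ := exists_prec_of_reducedWrtSet hrank h𝒞auto hconst hred
  refine absurd hprec (hmin B hB (fun g hg => ?_) fun g hg => ?_)
  · rcases hBsub hg with rfl | hg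
    exacts [hfI, h𝒞I hg]
  · rcases hBsub hg with rfl | hg
    exacts [hsep, h𝒞sep g hg]
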